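/- Let g ≥ 1, let U_g(ℂ) := { (1_g Z; 0 1_g) : Z ∈ M_g(ℂ), Zᵀ = Z } ⊆ Sp_{2g}(ℂ), and regard Sp_{2g}(ℤ) as a subset of Sp_{2g}(ℂ). Then the set Sp_{2g}(ℤ)·U_g(ℂ) = { γ·u : γ ∈ Sp_{2g}(ℤ), u ∈ U_g(ℂ) } is a closed subset of Sp_{2g}(ℂ) for the analytic topology (the topology induced from the standard topology on the space of complex 2g×2g matrices). Equivalently, the image of U_g(ℂ) in the quotient Sp_{2g}(ℤ)\Sp_{2g}(ℂ) is closed; under the identification of B_g(ℂ) with an open submanifold of this quotient, this says that the image of the map φ_g : H_g → B_g(ℂ) is closed for the analytic topology. -/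

import Mathlib

open Matrix

noncomputable section

/-- The standard symplectic matrix `J = (0 1; −1 0)` in `g × g` block form. -/
def Jm (R : Type*) [CommRing R] (g : ℕ) :
    Matrix (Fin g ⊕ Fin g) (Fin g ⊕ Fin g) R :=
  fromBlocks 0 1 (-1) 0

/-- The complex symplectic group `Sp_{2g}(ℂ)` as a set of matrices. -/
def SpSet (g : ℕ) : Set (Matrix (Fin g ⊕ Fin g) (Fin g ⊕ Fin g) ℂ) :=
  {M | M * Jm ℂ g * Mᵀ = Jm ℂ g}

/-! Membership of `m ∈ Sp_{2g}(ℂ)` in `Sp_{2g}(ℤ)·U_g(ℂ)` depends only on the first `g` columns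
of `m`: a symplectic matrix whose first block column is `(1; 0)` is `(1 Z; 0 1)` with `Z`
symmetric, so two symplectic matrices with the same first block column differ by a right factor
in `U_g(ℂ)`. The set is therefore the preimage, under the continuous map "first block column", of
the first block columns of integral symplectic matrices, which is closed because integral matrices
form a closed discrete subset of the complex ones. -/

namespace Matrix

variable {R m n n₁ n₂ : Type*}

lemma toCols₁_mul [Fintype n] [NonUnitalNonAssocSemiring R] (A : Matrix m n R)
    (B : Matrix n (n₁ ⊕ n₂) R) : (A * B).toCols₁ = A * B.toCols₁ :=
  rfl

lemma toCols₁_fromBlocks {m₁ m₂ : Type*} (A : Matrix m₁ n₁ R) (B : Matrix m₁ n₂ R)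
    (C : Matrix m₂ n₁ R) (D : Matrix m₂ n₂ R) :
    (fromBlocks A B C D).toCols₁ = fromRows A C := by
  ext (_ | _) _ <;> rfl

lemma toCols₁_one [DecidableEq n₁] [DecidableEq n₂] [Zero R] [One R] :
    (1 : Matrix (n₁ ⊕ n₂) (n₁ ⊕ n₂) R).toCols₁ = fromRows 1 0 := by
  rw [← fromBlocks_one, toCols₁_fromBlocks]

lemma toCols₁_mul_fromBlocks_one_zero [Fintype n₁] [Fintype n₂] [DecidableEq n₁] [DecidableEq n₂]
    [NonAssocSemiring R] (A : Matrix m (n₁ ⊕ n₂) R) (B : Matrix n₁ n₂ R) (D : Matrix n₂ n₂ R) :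
    (A * fromBlocks 1 B 0 D).toCols₁ = A.toCols₁ := by
  rw [toCols₁_mul, toCols₁_fromBlocks, ← toCols₁_one, ← toCols₁_mul, Matrix.mul_one]

lemma continuous_toCols₁ [TopologicalSpace R] :
    Continuous (toCols₁ : Matrix m (n₁ ⊕ n₂) R → Matrix m n₁ R) :=
  continuous_id.matrix_submatrix id Sum.inl

end Matrix

namespace SymplecticGroup

variable {l R : Type*} [DecidableEq l] [Fintype l] [CommRing R]

lemma exists_isSymm_eq_fromBlocks_of_toCols₁_eq {U : Matrix (l ⊕ l) (l ⊕ l) R}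
    (hU : U ∈ symplecticGroup l R) (h : U.toCols₁ = fromRows 1 0) :
    ∃ Z : Matrix l l R, Z.IsSymm ∧ U = fromBlocks 1 Z 0 1 := by
  have h₁₁ : U.toBlocks₁₁ = 1 := congrArg toRows₁ h
  have h₂₁ : U.toBlocks₂₁ = 0 := congrArg toRows₂ h
  rw [← fromBlocks_toBlocks U, h₁₁, h₂₁, fromBlocks_mem_iff] at hU
  obtain ⟨-, h₁₂, h₂₂⟩ := hU
  simp only [transpose_one, one_mul, transpose_zero, zero_mul, sub_zero] at h₂₂
  rw [h₂₂, mul_one, transpose_one, one_mul] at h₁₂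
  refine ⟨U.toBlocks₁₂, h₁₂, ?_⟩
  nth_rw 1 [← fromBlocks_toBlocks U]
  rw [h₁₁, h₂₁, h₂₂]

lemma exists_isSymm_eq_mul_fromBlocks_of_toCols₁_eq {A M : Matrix (l ⊕ l) (l ⊕ l) R}
    (hA : A ∈ symplecticGroup l R) (hM : M ∈ symplecticGroup l R) (h : M.toCols₁ = A.toCols₁) :
    ∃ Z : Matrix l l R, Z.IsSymm ∧ M = A * fromBlocks 1 Z 0 1 := by
  set U : symplecticGroup l R := ⟨A, hA⟩⁻¹ * ⟨M, hM⟩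
  have hAU : A * U = M :=
    congrArg Subtype.val (mul_inv_cancel_left (⟨A, hA⟩ : symplecticGroup l R) ⟨M, hM⟩)
  have hU : (U : Matrix (l ⊕ l) (l ⊕ l) R).toCols₁ = fromRows 1 0 := by
    have hinv : ((⟨A, hA⟩⁻¹ : symplecticGroup l R) : Matrix (l ⊕ l) (l ⊕ l) R) * A = 1 :=
      congrArg Subtype.val (inv_mul_cancel (⟨A, hA⟩ : symplecticGroup l R))
    rw [← toCols₁_one, ← hinv, toCols₁_mul, ← h, ← toCols₁_mul]
    rfl
  obtain ⟨Z, hZ, hUZ⟩ := exists_isSymm_eq_fromBlocks_of_toCols₁_eq U.2 hU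
  exact ⟨Z, hZ, by rw [← hAU, hUZ]⟩

end SymplecticGroup

lemma Jm_eq_neg_J (R : Type*) [CommRing R] (g : ℕ) : Jm R g = -J (Fin g) R := by
  simp [Jm, J, fromBlocks_neg]

lemma mul_Jm_mul_transpose_eq_iff {R : Type*} [CommRing R] {g : ℕ}
    (M : Matrix (Fin g ⊕ Fin g) (Fin g ⊕ Fin g) R) :
    M * Jm R g * Mᵀ = Jm R g ↔ M ∈ symplecticGroup (Fin g) R := by
  rw [SymplecticGroup.mem_iff, Jm_eq_neg_J, Matrix.mul_neg, Matrix.neg_mul, neg_inj]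

lemma isClosed_image_map_intCast {m n : Type*} [Finite m] [Finite n] (s : Set (Matrix m n ℤ)) :
    IsClosed ((·.map ((↑) : ℤ → ℂ)) '' s) :=
  Complex.isClosedEmbedding_intCast.matrix_map.isClosedMap s (isClosed_discrete s)

theorem statement16_general (g : ℕ) :
    IsClosed {m : (SpSet g : Set (Matrix (Fin g ⊕ Fin g) (Fin g ⊕ Fin g) ℂ)) |
      ∃ (γZ : Matrix (Fin g ⊕ Fin g) (Fin g ⊕ Fin g) ℤ)
        (Z : Matrix (Fin g) (Fin g) ℂ),
        γZ * Jm ℤ g * γZᵀ = Jm ℤ g ∧ Zᵀ = Z ∧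
        (m : Matrix (Fin g ⊕ Fin g) (Fin g ⊕ Fin g) ℂ) =
          γZ.map (fun a => (a : ℂ)) * fromBlocks 1 Z 0 1} := by
  set Γ : Set (Matrix (Fin g ⊕ Fin g) (Fin g ⊕ Fin g) ℤ) := {γ | γ * Jm ℤ g * γᵀ = Jm ℤ g}
  convert (isClosed_image_map_intCast (toCols₁ '' Γ)).preimage
    (continuous_toCols₁.comp continuous_subtype_val) using 1
  ext ⟨m, hm⟩
  constructor
  · rintro ⟨γ, Z, hγ, -, rfl⟩
    refine ⟨γ.toCols₁, ⟨γ, hγ, rfl⟩, ?_⟩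
    exact (toCols₁_mul_fromBlocks_one_zero (γ.map ((↑) : ℤ → ℂ)) Z 1).symm
  · rintro ⟨-, ⟨γ, hγ, rfl⟩, hγm⟩
    have hγC : γ.map ((↑) : ℤ → ℂ) ∈ symplecticGroup (Fin g) ℂ :=
      SymplecticGroup.map_mem ((mul_Jm_mul_transpose_eq_iff γ).1 hγ) (Int.castRingHom ℂ)
    have hmC : m ∈ symplecticGroup (Fin g) ℂ := (mul_Jm_mul_transpose_eq_iff m).1 hm
    obtain ⟨Z, hZ, hmZ⟩ :=
      SymplecticGroup.exists_isSymm_eq_mul_fromBlocks_of_toCols₁_eq hγC hmC hγm.symm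
    exact ⟨γ, Z, hγ, hZ, hmZ⟩

/-- the set `Sp_{2g}(ℤ)·U_g(ℂ)` of products of an integral symplectic
matrix with a unipotent matrix `(1 Z; 0 1)`, `Z` symmetric, is closed in
`Sp_{2g}(ℂ)` for the analytic topology. -/
theorem statement16 (g : ℕ) (hg : 1 ≤ g) :
    IsClosed {m : (SpSet g : Set (Matrix (Fin g ⊕ Fin g) (Fin g ⊕ Fin g) ℂ)) |
      ∃ (γZ : Matrix (Fin g ⊕ Fin g) (Fin g ⊕ Fin g) ℤ)
        (Z : Matrix (Fin g) (Fin g) ℂ),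
        γZ * Jm ℤ g * γZᵀ = Jm ℤ g ∧ Zᵀ = Z ∧
        (m : Matrix (Fin g ⊕ Fin g) (Fin g ⊕ Fin g) ℂ) =
          γZ.map (fun a => (a : ℂ)) * fromBlocks 1 Z 0 1} :=
  statement16_general g
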